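/- Let (X,d) be a complete metric space, let f : X → (−∞,∞] be lower semicontinuous, and let x̄ be a local minimizer of f with f̄ = f(x̄) finite. If the level set L_{f̄} = {x ∈ X : f(x) ≤ f̄} is identifiable for f at x̄, then x̄ is a weak sharp minimizer: there exists ε > 0 such that f(x) ≥ f̄ + ε·dist(x, L_{f̄}) for all x near x̄, where dist(x, L_{f̄}) = inf_{y ∈ L_{f̄}} d(x,y). -/

import Mathlib

open Filter Topology
open scoped ENNReal NNReal

/-- The slope `|∇f|(x)`: the infimum of all `δ > 0` such that `x` is a local minimizer of
`f + δ·d(·,x)`; it equals `∞` at points where `f x = ⊤`. -/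
noncomputable def slopeM {X : Type*} [MetricSpace X] (f : X → EReal) (x : X) : ℝ≥0∞ :=
  if f x = ⊤ then ⊤
  else sInf {δ : ℝ≥0∞ | ∃ c : ℝ, 0 < c ∧ δ = ENNReal.ofReal c ∧
    ∀ᶠ z in 𝓝 x, f x ≤ f z + ((c * dist z x : ℝ) : EReal)}

/-- The modulus of identifiability: `liminf_{x → xbar, x ∉ M, f(x) → f(xbar)} |∇f|(x)`. -/
noncomputable def identModulus {X : Type*} [MetricSpace X] (f : X → EReal) (M : Set X)
    (xbar : X) : ℝ≥0∞ :=
  Filter.liminf (slopeM f) (𝓝[Mᶜ] xbar ⊓ Filter.comap f (𝓝 (f xbar)))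

/-- `M` is an identifiable set for `f` at `xbar`: it is closed, contains `xbar`, and the
modulus of identifiability is strictly positive. -/
def Identifiable {X : Type*} [MetricSpace X] (f : X → EReal) (M : Set X) (xbar : X) : Prop :=
  IsClosed M ∧ xbar ∈ M ∧ 0 < identModulus f M xbar

/-!
Take `0 < α` below the modulus of identifiability, so that `|∇f|(y) > α` whenever `y ∉ L`
is near `x̄` and `f y` is near `f x̄`. If some `z` near `x̄` had `f z < f x̄ + (α/2)·d(z, L)`,
then `z ∉ L`, and Ekeland's variational principle with parameter `α`, applied to `f` clamped
to `[f x̄, f z + 1]` (which is `≤ f` on a ball around `z`), would produce `y` with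
`d(y, z) ≤ d(z, L)/2` (so `y ∉ L`), `f y ≤ f z` and `|∇f|(y) ≤ α`: a contradiction.
-/

namespace Ekeland

variable {X : Type*} [MetricSpace X] {g : X → ℝ} {c : ℝ} {x y w : X}

def improvementSet (g : X → ℝ) (c : ℝ) (x : X) : Set X := {w | g w + c * dist w x ≤ g x}

theorem self_mem_improvementSet : x ∈ improvementSet g c x := by
  simp [improvementSet]

theorem improvementSet_subset (hc : 0 ≤ c) (hy : y ∈ improvementSet g c x) :
    improvementSet g c y ⊆ improvementSet g c x := fun w hw => by
  have := mul_le_mul_of_nonneg_left (dist_triangle w y x) hc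
  simp only [improvementSet, Set.mem_ofPred_eq] at hy hw ⊢
  linarith

theorem isClosed_improvementSet (hg : LowerSemicontinuous g) (c : ℝ) (x : X) :
    IsClosed (improvementSet g c x) :=
  (hg.add (continuous_const.mul (continuous_id.dist continuous_const)).lowerSemicontinuous)
    |>.isClosed_preimage (g x)

theorem exists_mem_improvementSet_le_sInf_add {δ : ℝ} (hδ : 0 < δ) (x : X) :
    ∃ y ∈ improvementSet g c x, g y ≤ sInf (g '' improvementSet g c x) + δ := by
  obtain ⟨_, ⟨y, hy, rfl⟩, hlt⟩ := exists_lt_of_csInf_lt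
    (Set.Nonempty.image g ⟨x, self_mem_improvementSet⟩) (lt_add_of_pos_right _ hδ)
  exact ⟨y, hy, hlt.le⟩

theorem mul_dist_le_of_le_sInf_add (hbdd : BddBelow (Set.range g)) (hc : 0 ≤ c) {δ : ℝ}
    (hy : y ∈ improvementSet g c x) (hyδ : g y ≤ sInf (g '' improvementSet g c x) + δ)
    (hw : w ∈ improvementSet g c y) : c * dist w y ≤ δ := by
  have : sInf (g '' improvementSet g c x) ≤ g w :=
    csInf_le (hbdd.mono (Set.image_subset_range _ _)) ⟨w, improvementSet_subset hc hy hw, rfl⟩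
  have : g w + c * dist w y ≤ g y := hw
  linarith

end Ekeland

open Ekeland in
theorem LowerSemicontinuous.exists_le_add_dist_forall_le_add_dist {X : Type*} [MetricSpace X]
    [CompleteSpace X] {g : X → ℝ} (hg : LowerSemicontinuous g) (hbdd : BddBelow (Set.range g))
    {c : ℝ} (hc : 0 < c) (x₀ : X) :
    ∃ y, g y + c * dist y x₀ ≤ g x₀ ∧ ∀ w, g y ≤ g w + c * dist w y := by
  set S := improvementSet g c
  choose next hnext_mem hnext_le using fun (n : ℕ) x =>
    exists_mem_improvementSet_le_sInf_add (g := g) (c := c) (by positivity : 0 < c / (n + 1))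
      x
  let u : ℕ → X := fun n => Nat.rec x₀ next n
  have hS_anti : Antitone (S ∘ u) := antitone_nat_of_succ_le fun n =>
    improvementSet_subset hc.le (hnext_mem n (u n))
  have hsmall (n : ℕ) : ∀ w ∈ S (u (n + 1)), dist w (u (n + 1)) ≤ 1 / (n + 1) := fun w hw => by
    have := mul_dist_le_of_le_sInf_add hbdd hc.le (hnext_mem n (u n)) (hnext_le n (u n)) hw
    rw [← mul_one_div] at this
    exact le_of_mul_le_mul_left this hc
  have hcauchy : CauchySeq u := by
    refine Metric.cauchySeq_iff'.2 fun ε hε => ?_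
    obtain ⟨N, hN⟩ := exists_nat_one_div_lt hε
    exact ⟨N + 1, fun n hn => (hsmall N _ (hS_anti hn self_mem_improvementSet)).trans_lt hN⟩
  obtain ⟨y, hy⟩ := cauchySeq_tendsto_of_complete hcauchy
  have hyS (n : ℕ) : y ∈ S (u n) :=
    (isClosed_improvementSet hg c (u n)).mem_of_tendsto hy
      ((eventually_ge_atTop n).mono fun m hm => hS_anti hm self_mem_improvementSet)
  refine ⟨y, hyS 0, fun w => ?_⟩
  by_contra! hw
  have hwS : w ∈ S y := hw.le
  have hw_lim : Tendsto (fun n => u (n + 1)) atTop (𝓝 w) := by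
    refine tendsto_iff_dist_tendsto_zero.2 (squeeze_zero (fun _ => dist_nonneg)
      (fun n => ?_) tendsto_one_div_add_atTop_nhds_zero_nat)
    rw [dist_comm]
    exact hsmall n w (improvementSet_subset hc.le (hyS (n + 1)) hwS)
  obtain rfl : w = y := tendsto_nhds_unique hw_lim ((tendsto_add_atTop_iff_nat 1).2 hy)
  simp at hw

namespace EReal

noncomputable def clampToReal (t M : ℝ) (e : EReal) : ℝ := (max (t : EReal) (min e M)).toReal

variable {t M : ℝ} {e : EReal}

theorem coe_clampToReal : (clampToReal t M e : EReal) = max (t : EReal) (min e M) :=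
  coe_toReal (max_lt (coe_lt_top t) ((min_le_right _ _).trans_lt (coe_lt_top M))).ne
    ((bot_lt_coe t).trans_le (le_max_left _ _)).ne'

theorem le_clampToReal : t ≤ clampToReal t M e := by
  rw [← EReal.coe_le_coe_iff, coe_clampToReal]
  exact le_max_left _ _

theorem coe_clampToReal_le (he : t ≤ e) : (clampToReal t M e : EReal) ≤ e := by
  rw [coe_clampToReal]
  exact max_le he (min_le_left _ _)

theorem coe_clampToReal_eq (he : t ≤ e) (hM : clampToReal t M e < M) :
    (clampToReal t M e : EReal) = e := by
  have hM' := EReal.coe_lt_coe_iff.2 hM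
  rw [coe_clampToReal] at hM' ⊢
  have he' : e < M := by simpa using (le_max_right _ _).trans_lt hM'
  rw [min_eq_left he'.le, max_eq_right he]

theorem monotone_clampToReal : Monotone (clampToReal t M) := fun e e' h => by
  rw [← EReal.coe_le_coe_iff, coe_clampToReal, coe_clampToReal]
  exact max_le_max le_rfl (min_le_min_right _ h)

theorem continuous_clampToReal : Continuous (clampToReal t M) :=
  continuousOn_toReal.comp_continuous (by fun_prop) fun e => by
    rw [← coe_clampToReal]; simp

end EReal

theorem slopeM_le_ofReal {X : Type*} [MetricSpace X] {f : X → EReal} {y : X} {c : ℝ}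
    (hc : 0 < c) (hy : f y ≠ ⊤) (h : ∀ᶠ w in 𝓝 y, f y ≤ f w + ((c * dist w y : ℝ) : EReal)) :
    slopeM f y ≤ ENNReal.ofReal c := by
  rw [slopeM, if_neg hy]
  exact sInf_le ⟨c, hc, rfl, h⟩

open EReal Metric in
theorem exists_dist_le_slopeM_le {X : Type*} [MetricSpace X] [CompleteSpace X] {f : X → EReal}
    (hf : LowerSemicontinuous f) {z : X} {t c lam r : ℝ} (hc : 0 < c) (hlam : 0 ≤ lam)
    (hlamr : lam < r) (ht : ∀ w ∈ ball z r, (t : EReal) ≤ f w)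
    (hz : f z ≤ ((t + c * lam : ℝ) : EReal)) :
    ∃ y, dist y z ≤ lam ∧ f y ≤ f z ∧ slopeM f y ≤ ENNReal.ofReal c := by
  have hz_ball : z ∈ ball z r := mem_ball_self (hlam.trans_lt hlamr)
  set s := (f z).toReal
  have hs : (s : EReal) = f z :=
    coe_toReal (hz.trans_lt (coe_lt_top _)).ne ((bot_lt_coe t).trans_le (ht z hz_ball)).ne'
  have hst : s ≤ t + c * lam := EReal.coe_le_coe_iff.1 (hs ▸ hz)
  -- Capping at `s + 1` rather than `s` keeps the Ekeland point strictly below the cap, where `g`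
  -- agrees with `f`.
  set g := fun w => clampToReal t (s + 1) (f w)
  have hg : LowerSemicontinuous g :=
    continuous_clampToReal.comp_lowerSemicontinuous hf monotone_clampToReal
  have hg_bdd : BddBelow (Set.range g) := ⟨t, by rintro _ ⟨w, rfl⟩; exact le_clampToReal⟩
  obtain ⟨y, hyz, hy⟩ := hg.exists_le_add_dist_forall_le_add_dist hg_bdd hc z
  have hgz : g z ≤ s := EReal.coe_le_coe_iff.1 (hs ▸ coe_clampToReal_le (ht z hz_ball))
  have hgy : t ≤ g y := le_clampToReal
  have hdist : dist y z ≤ lam := le_of_mul_le_mul_left (by linarith) hc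
  have hy_ball : y ∈ ball z r := hdist.trans_lt hlamr
  have hgy_eq : (g y : EReal) = f y :=
    coe_clampToReal_eq (ht y hy_ball) (by nlinarith [dist_nonneg (x := y) (y := z)])
  refine ⟨y, hdist, ?_, slopeM_le_ofReal hc (hgy_eq ▸ coe_ne_top _) ?_⟩
  · rw [← hgy_eq, ← hs, EReal.coe_le_coe_iff]
    nlinarith [dist_nonneg (x := y) (y := z)]
  · filter_upwards [isOpen_ball.mem_nhds hy_ball] with w hw
    calc f y = g y := hgy_eq.symm
      _ ≤ ((g w + c * dist w y : ℝ) : EReal) := EReal.coe_le_coe_iff.2 (hy w)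
      _ = g w + ((c * dist w y : ℝ) : EReal) := coe_add _ _
      _ ≤ f w + ((c * dist w y : ℝ) : EReal) := by gcongr; exact coe_clampToReal_le (ht w hw)

theorem exists_lt_eventually_of_eventually_nhdsWithin_inf_comap {X : Type*} [TopologicalSpace X]
    {f : X → EReal} {s : Set X} {x : X} {a : EReal} {P : X → Prop} (ha : a ≠ ⊤)
    (h : ∀ᶠ y in 𝓝[s] x ⊓ comap f (𝓝 a), P y) :
    ∃ u, a < u ∧ ∀ᶠ y in 𝓝 x, y ∈ s → a ≤ f y → f y < u → P y := by
  obtain ⟨p, hp, q, hq, hpq⟩ := Filter.mem_inf_iff.1 h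
  obtain ⟨V, hV, hVq⟩ := mem_comap.1 hq
  obtain ⟨u, hau, hu⟩ := exists_Ico_subset_of_mem_nhds hV ⟨⊤, ha.lt_top⟩
  refine ⟨u, hau, ?_⟩
  filter_upwards [mem_nhdsWithin_iff_eventually.1 hp] with y hy hys hay hyu
  have hy_pq : y ∈ p ∩ q := ⟨hy hys, hVq (hu ⟨hay, hyu⟩)⟩
  rwa [← hpq] at hy_pq

theorem eventually_coe_add_mul_infDist_lt {X : Type*} [PseudoMetricSpace X] {s : Set X} {x : X}
    (hx : x ∈ s) (ε : ℝ) {t : ℝ} {u : EReal} (hu : (t : EReal) < u) :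
    ∀ᶠ z in 𝓝 x, (t : EReal) + ((ε * Metric.infDist z s : ℝ) : EReal) < u := by
  have hlim : Tendsto (fun z => ((t + ε * Metric.infDist z s : ℝ) : EReal)) (𝓝 x)
      (𝓝 ((t + ε * Metric.infDist x s : ℝ) : EReal)) :=
    (continuous_coe_real_ereal.comp (continuous_const.add
      (continuous_const.mul (Metric.continuous_infDist_pt s)))).tendsto x
  rw [Metric.infDist_zero_of_mem hx, mul_zero, add_zero] at hlim
  filter_upwards [hlim.eventually (eventually_lt_nhds hu)] with z hz
  rwa [← EReal.coe_add]

/-- Weak sharp minimizers: if the level set `{f ≤ f(xbar)}` is identifiable at a local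
minimizer `xbar`, then `xbar` is a weak sharp minimizer. -/
theorem weak_sharp_minimizer_of_identifiable_levelSet
    {X : Type*} [MetricSpace X] [CompleteSpace X]
    (f : X → EReal) (hlsc : LowerSemicontinuous f) (hbot : ∀ z, f z ≠ ⊥)
    (xbar : X) (hfin : f xbar ≠ ⊤)
    (hmin : ∀ᶠ z in 𝓝 xbar, f xbar ≤ f z)
    (hL : Identifiable f {z | f z ≤ f xbar} xbar) :
    ∃ ε : ℝ, 0 < ε ∧ ∀ᶠ z in 𝓝 xbar,
      f xbar + ((ε * Metric.infDist z {w | f w ≤ f xbar} : ℝ) : EReal) ≤ f z := by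
  set L := {z | f z ≤ f xbar}
  obtain ⟨hL_closed, hxbar, hL_pos⟩ := hL
  obtain ⟨t, ht⟩ : ∃ t : ℝ, f xbar = t := ⟨_, (EReal.coe_toReal hfin (hbot xbar)).symm⟩
  obtain ⟨α, hα, hαL⟩ : ∃ α : ℝ, 0 < α ∧ ENNReal.ofReal α < identModulus f L xbar := by
    obtain ⟨α, -, hα0, hα⟩ := ENNReal.lt_iff_exists_real_btwn.1 hL_pos
    exact ⟨α, ENNReal.ofReal_pos.1 hα0, hα⟩
  obtain ⟨u, hu, hslope⟩ :=
    exists_lt_eventually_of_eventually_nhdsWithin_inf_comap hfin (eventually_lt_of_lt_liminf hαL)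
  obtain ⟨r, hr, hball⟩ := Metric.eventually_nhds_iff_ball.1 (hslope.and hmin)
  refine ⟨α / 2, by positivity, ?_⟩
  filter_upwards [Metric.ball_mem_nhds xbar (half_pos hr),
    ht ▸ eventually_coe_add_mul_infDist_lt hxbar (α / 2) (ht ▸ hu)] with z hz hzu
  rw [Metric.mem_ball] at hz
  by_contra! hlt
  have hzL : z ∉ L := fun hzL => by
    rw [Metric.infDist_zero_of_mem hzL, mul_zero, EReal.coe_zero, add_zero] at hlt
    exact hlt.not_ge (hball z (Metric.mem_ball.2 (by linarith))).2
  have hd_pos : 0 < Metric.infDist z L :=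
    (hL_closed.notMem_iff_infDist_pos ⟨xbar, hxbar⟩).1 hzL
  have hd_le : Metric.infDist z L ≤ dist z xbar := Metric.infDist_le_dist_of_mem hxbar
  obtain ⟨y, hyz, hyf, hy⟩ := exists_dist_le_slopeM_le hlsc (z := z) (c := α)
    (lam := Metric.infDist z L / 2) (r := r / 2) hα (by positivity) (by linarith)
    (fun w hw => ht ▸ (hball w (Metric.ball_subset_ball' (by linarith) hw)).2)
    (by rw [ht, ← EReal.coe_add] at hlt; convert hlt.le using 3; ring)
  have hyL : y ∉ L := fun hyL => by
    linarith [Metric.infDist_le_dist_of_mem hyL (x := z), dist_comm y z]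
  have hy_ball : y ∈ Metric.ball xbar r :=
    Metric.mem_ball.2 (by linarith [dist_triangle y z xbar])
  have hy_slope := (hball y hy_ball).1 hyL (not_le.1 hyL).le (hyf.trans_lt (hlt.trans hzu))
  exact (hy.trans_lt hy_slope).false
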